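/- arXiv:2205.14560 — 3 statements merged into one kernel-verified Lean document; each statement's English description precedes it below -/
import Mathlib

section
/- The eigenvalues of the matrix F'(U)·n given by rows [0, n_x, n_y, 0; (ghθ/2 - u^2)n_x - uv n_y, 2u n_x + v n_y, u n_y, (gh/2) n_x; (ghθ/2 - v^2)n_y - uv n_x, v n_x, u n_x + 2v n_y, (gh/2) n_y; -θ(u n_x + v n_y), θ n_x, θ n_y, u n_x + v n_y] are λ¹ = u n_x + v n_y - c, λ² = λ³ = u n_x + v n_y, and λ⁴ = u n_x + v n_y + c, where c = √(ghθ). -/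
/-- The characteristic polynomial of the Ripa flux Jacobian in direction `n = (nx, ny)`
(with `nx^2 + ny^2 = 1`) is `(λ - (u nx + v ny))^2 ((λ - (u nx + v ny))^2 - g h θ)`,
so the eigenvalues are `u nx + v ny` (double) and `u nx + v ny ± √(g h θ)`. -/
theorem ripa_jacobian_eigenvalues
    (g h θ u v nx ny : ℝ) (hg : 0 < g) (hh : 0 < h) (hθ : 0 < θ)
    (hn : nx ^ 2 + ny ^ 2 = 1) :
    ∀ lam : ℝ,
      (lam • (1 : Matrix (Fin 4) (Fin 4) ℝ) -
        !![0, nx, ny, 0;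
           (g * h * θ / 2 - u ^ 2) * nx - u * v * ny, 2 * u * nx + v * ny, u * ny, g * h / 2 * nx;
           (g * h * θ / 2 - v ^ 2) * ny - u * v * nx, v * nx, u * nx + 2 * v * ny, g * h / 2 * ny;
           -θ * (u * nx + v * ny), θ * nx, θ * ny, u * nx + v * ny]).det
      = (lam - (u * nx + v * ny)) ^ 2 * ((lam - (u * nx + v * ny)) ^ 2 - g * h * θ) := by
  intro lam
  have : (lam • (1 : Matrix (Fin 4) (Fin 4) ℝ) -
        !![0, nx, ny, 0;
           (g * h * θ / 2 - u ^ 2) * nx - u * v * ny, 2 * u * nx + v * ny, u * ny, g * h / 2 * nx;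
           (g * h * θ / 2 - v ^ 2) * ny - u * v * nx, v * nx, u * nx + 2 * v * ny, g * h / 2 * ny;
           -θ * (u * nx + v * ny), θ * nx, θ * ny, u * nx + v * ny]) =
      !![lam, -nx, -ny, 0;
         -((g * h * θ / 2 - u ^ 2) * nx - u * v * ny), lam - (2 * u * nx + v * ny), -(u * ny), -(g * h / 2 * nx);
         -((g * h * θ / 2 - v ^ 2) * ny - u * v * nx), -(v * nx), lam - (u * nx + 2 * v * ny), -(g * h / 2 * ny);
         θ * (u * nx + v * ny), -(θ * nx), -(θ * ny), lam - (u * nx + v * ny)] := by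
    ext i j
    fin_cases i <;> fin_cases j <;>
      simp [Matrix.one_apply] <;> ring
  rw [this]
  simp [Matrix.det_succ_row_zero, Fin.sum_univ_succ, Fin.succAbove]
  linear_combination -(g*h*θ*(lam-(u*nx+v*ny))^2) * hn
end

section
/- Under the lake-at-rest steady state at an interface (m^int = m^ext = 0, w^int = w^ext = 0, η^int = C₁ h^int, η^ext = C₁ h^ext, h^int + b^int = h^ext + b^ext = C₂, with h^int, h^ext > 0), the reconstructed states U^{int,*} = (h*, h* m^int/h^int, h* w^int/h^int, h* η^int/h^int) and U^{ext,*} = (h*_ext, h*_ext m^ext/h^ext, h*_ext w^ext/h^ext, h*_ext η^ext/h^ext), where h* and h*_ext are the hydrostatic reconstructions of h^int and h^ext, are equal as vectors in ℝ⁴. -/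
/-- Under the lake-at-rest steady state at an interface, the hydrostatically
reconstructed interior and exterior states are equal as vectors in ℝ⁴. -/
theorem reconstructed_states_equal
    (hint hext bint bext mint mext wint wext ηint ηext C₁ C₂ : ℝ)
    (hC₁ : 0 < C₁) (hC₂ : 0 < C₂)
    (hhint : 0 < hint) (hhext : 0 < hext)
    (hm : mint = 0) (hm' : mext = 0) (hw : wint = 0) (hw' : wext = 0)
    (hη : ηint = C₁ * hint) (hη' : ηext = C₁ * hext)
    (hs1 : hint + bint = C₂) (hs2 : hext + bext = C₂) :
    (![max 0 (hint + bint - max bint bext),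
       max 0 (hint + bint - max bint bext) * (mint / hint),
       max 0 (hint + bint - max bint bext) * (wint / hint),
       max 0 (hint + bint - max bint bext) * (ηint / hint)] : Fin 4 → ℝ)
    = ![max 0 (hext + bext - max bint bext),
       max 0 (hext + bext - max bint bext) * (mext / hext),
       max 0 (hext + bext - max bint bext) * (wext / hext),
       max 0 (hext + bext - max bint bext) * (ηext / hext)] := by
  have h1 : ηint / hint = C₁ := by rw [hη]; field_simp
  have h2 : ηext / hext = C₁ := by rw [hη']; field_simp
  rw [hs1, hs2, hm, hm', hw, hw', h1, h2]; simp
end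

section
/- If η(x) = C₁ h(x) pointwise and η̄ = C₁ h̄ for the cell averages, with C₁ > 0 and h̄ > 0, then the linear scaling limiter coefficients satisfy λ_h = λ_η, and consequently the limited functions satisfy ĥη(x) = C₁ ĥh(x) for all x. -/
/-! Both the numerator `f̄` and the denominator `f̄ - min_G f` of the limiter coefficient are
homogeneous of degree one in `(f, f̄)` (the minimum commutes with multiplication by `C₁ > 0`),
so the coefficient is invariant under positive scaling (also when the denominator vanishes, as
`x / 0 = 0` on both sides) and the limited function scales with it. -/

theorem Finset.mul_inf'_of_nonneg {ι R : Type*} [Mul R] [Zero R] [LinearOrder R] [PosMulMono R]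
    (s : Finset ι) (hs : s.Nonempty) (f : ι → R) {c : R} (hc : 0 ≤ c) :
    c * s.inf' hs f = s.inf' hs fun i ↦ c * f i :=
  apply_inf'_eq_inf'_comp hs (f := f) (c * ·) fun _ _ ↦
    Monotone.map_min fun _ _ hab ↦ mul_le_mul_of_nonneg_left hab hc

section ScalingLimiter

variable {X : Type*} (G : Finset X) (hG : G.Nonempty)

noncomputable def limiterCoeff (f : X → ℝ) (fbar : ℝ) : ℝ :=
  min 1 (fbar / (fbar - G.inf' hG f))

noncomputable def limitedValue (f : X → ℝ) (fbar : ℝ) (x : X) : ℝ :=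
  limiterCoeff G hG f fbar * (f x - fbar) + fbar

variable {G hG}

theorem limiterCoeff_const_mul {c : ℝ} (hc : 0 < c) (f : X → ℝ) (fbar : ℝ) :
    limiterCoeff G hG (fun x ↦ c * f x) (c * fbar) = limiterCoeff G hG f fbar := by
  rw [limiterCoeff, limiterCoeff, ← G.mul_inf'_of_nonneg hG f hc.le, ← mul_sub,
    mul_div_mul_left _ _ hc.ne']

theorem limitedValue_const_mul {c : ℝ} (hc : 0 < c) (f : X → ℝ) (fbar : ℝ) (x : X) :
    limitedValue G hG (fun x ↦ c * f x) (c * fbar) x = c * limitedValue G hG f fbar x := by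
  rw [limitedValue, limitedValue, limiterCoeff_const_mul hc]
  ring

end ScalingLimiter

theorem pp_limiter_preserves_linear_relation_general {X : Type*}
    (h η : X → ℝ) (G : Finset X) (hG : G.Nonempty)
    (C₁ hbar ηbar : ℝ) (hC₁ : 0 < C₁)
    (hrel : ∀ x, η x = C₁ * h x) (hbar_rel : ηbar = C₁ * hbar) :
    min 1 (hbar / (hbar - G.inf' hG h)) = min 1 (ηbar / (ηbar - G.inf' hG η)) ∧
    ∀ x, min 1 (ηbar / (ηbar - G.inf' hG η)) * (η x - ηbar) + ηbar
        = C₁ * (min 1 (hbar / (hbar - G.inf' hG h)) * (h x - hbar) + hbar) := by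
  obtain rfl : η = fun x ↦ C₁ * h x := funext hrel
  subst hbar_rel
  exact ⟨(limiterCoeff_const_mul hC₁ h hbar).symm, limitedValue_const_mul hC₁ h hbar⟩

/-- If `η = C₁ h` pointwise and for cell averages, then the linear scaling limiter
coefficients agree, and the limited functions satisfy `η̂ = C₁ ĥ`. -/
theorem pp_limiter_preserves_linear_relation {X : Type*}
    (h η : X → ℝ) (G : Finset X) (hG : G.Nonempty)
    (C₁ hbar ηbar : ℝ) (hC₁ : 0 < C₁) (hbar_pos : 0 < hbar)
    (hrel : ∀ x, η x = C₁ * h x) (hbar_rel : ηbar = C₁ * hbar)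
    (hden : 0 < hbar - G.inf' hG h) :
    min 1 (hbar / (hbar - G.inf' hG h)) = min 1 (ηbar / (ηbar - G.inf' hG η)) ∧
    ∀ x, min 1 (ηbar / (ηbar - G.inf' hG η)) * (η x - ηbar) + ηbar
        = C₁ * (min 1 (hbar / (hbar - G.inf' hG h)) * (h x - hbar) + hbar) :=
  pp_limiter_preserves_linear_relation_general h η G hG C₁ hbar ηbar hC₁ hrel hbar_rel
end
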